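/- arXiv:1905.05496 — 7 statements merged into one kernel-verified Lean document; each statement's English description precedes it below -/
import Mathlib

section
/- Let E be a lattice effect algebra. Define x ⊙ y := (x'+y')' whenever x' ≤ y, and x → y := (x ∧ y) + x'. Then (E,∨,∧,⊙,→,0,1) is a divisible commutative quasiresiduated lattice. -/
/-- An effect algebra: partial commutative associative `add` with definedness
predicate `D`, orthosupplement `compl`, bottom `zero` and top `one`. -/
structure EffectAlgebra (E : Type*) where
  D : E → E → Prop
  add : E → E → E
  compl : E → E
  zero : E
  one : E
  comm_def : ∀ x y, D x y → D y x
  comm : ∀ x y, D x y → add x y = add y x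
  assoc_iff : ∀ x y z, (D x y ∧ D (add x y) z) ↔ (D y z ∧ D x (add y z))
  assoc : ∀ x y z, D x y → D (add x y) z → add (add x y) z = add x (add y z)
  compl_def : ∀ x, D x (compl x)
  compl_add : ∀ x, add x (compl x) = one
  compl_unique : ∀ x u, D x u → add x u = one → u = compl x
  one_add : ∀ x, D one x → x = zero

/-- The induced order of an effect algebra: `x ≤ y` iff `x + z = y` for some `z`. -/
def EffectAlgebra.le {E : Type*} (A : EffectAlgebra E) (x y : E) : Prop :=
  ∃ z, A.D x z ∧ A.add x z = y
/-- A lattice effect algebra: an effect algebra whose induced order coincides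
with a given bounded lattice order. -/
structure LatticeEffectAlgebra (E : Type*) [Lattice E] [BoundedOrder E]
    extends EffectAlgebra E where
  le_iff : ∀ x y, (∃ z, D x z ∧ add x z = y) ↔ x ≤ y
  zero_eq : zero = ⊥
  one_eq : one = ⊤
/-- A commutative quasiresiduated lattice: a bounded lattice with a partial
multiplication `odot` (defined iff `x' ≤ y`, where `x' = x → 0 = imp x ⊥`)
forming a partial commutative monoid with unit `⊤`, an everywhere defined
`imp`, satisfying involutivity and antitonicity of `'` and quasiadjointness. -/
structure CommQRL (C : Type*) [Lattice C] [BoundedOrder C] where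
  odot : C → C → C
  imp : C → C → C
  odot_top : ∀ x, odot x ⊤ = x
  top_odot : ∀ x, odot ⊤ x = x
  comm_def : ∀ x y, imp x ⊥ ≤ y → imp y ⊥ ≤ x
  comm : ∀ x y, imp x ⊥ ≤ y → odot x y = odot y x
  assoc_iff : ∀ x y z,
    (imp x ⊥ ≤ y ∧ imp (odot x y) ⊥ ≤ z) ↔ (imp y ⊥ ≤ z ∧ imp x ⊥ ≤ odot y z)
  assoc : ∀ x y z, imp x ⊥ ≤ y → imp (odot x y) ⊥ ≤ z →
    odot (odot x y) z = odot x (odot y z)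
  invol : ∀ x, imp (imp x ⊥) ⊥ = x
  anti : ∀ x y, x ≤ y → imp y ⊥ ≤ imp x ⊥
  quasiadj : ∀ x y z,
    odot (x ⊔ imp y ⊥) y ≤ y ⊓ z ↔ x ⊔ imp y ⊥ ≤ imp y z

namespace LatticeEffectAlgebra

variable {E : Type*} [Lattice E] [BoundedOrder E] (A : LatticeEffectAlgebra E)

lemma invol' (x : E) : A.compl (A.compl x) = x := by
  have hD : A.D (A.compl x) x := A.comm_def _ _ (A.compl_def x)
  have h1 : A.add (A.compl x) x = A.one := by
    rw [← A.comm _ _ (A.compl_def x)]; exact A.compl_add x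
  exact (A.compl_unique (A.compl x) x hD h1).symm

lemma compl_inj' {x y : E} (h : A.compl x = A.compl y) : x = y := by
  rw [← A.invol' x, h, A.invol']

lemma one_compl' : A.compl A.one = A.zero := A.one_add _ (A.compl_def A.one)

lemma zero_compl' : A.compl A.zero = A.one := by rw [← A.one_compl', A.invol']

lemma compl_top' : A.compl ⊤ = ⊥ := by rw [← A.one_eq, A.one_compl', A.zero_eq]

lemma sub' {a c : E} (h : A.D a c) :
    A.D c (A.compl (A.add a c)) ∧
      A.add c (A.compl (A.add a c)) = A.compl a := by
  have h2 : A.D (A.add a c) (A.compl (A.add a c)) := A.compl_def _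
  have h3 := (A.assoc_iff a c (A.compl (A.add a c))).mp ⟨h, h2⟩
  refine ⟨h3.1, ?_⟩
  exact A.compl_unique a _ h3.2
    (by rw [← A.assoc a c _ h h2]; exact A.compl_add _)

lemma D_le' {x y : E} (h : A.D x y) : y ≤ A.compl x :=
  (A.le_iff _ _).mp ⟨_, (A.sub' h).1, (A.sub' h).2⟩

lemma anti' {x y : E} (h : x ≤ y) : A.compl y ≤ A.compl x := by
  obtain ⟨z, hz, hadd⟩ := (A.le_iff x y).mpr h
  have h1 := A.sub' hz
  rw [hadd] at h1
  exact (A.le_iff _ _).mp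
    ⟨z, A.comm_def _ _ h1.1, by rw [← A.comm _ _ h1.1]; exact h1.2⟩

lemma D_iff' {x y : E} : A.D x y ↔ x ≤ A.compl y := by
  constructor
  · intro h; exact A.D_le' (A.comm_def _ _ h)
  · intro h
    obtain ⟨z, hz, hadd⟩ := (A.le_iff _ _).mpr h
    have hD : A.D (A.add x z) y := by
      rw [hadd]; exact A.comm_def _ _ (A.compl_def y)
    have h1 := (A.assoc_iff x z y).mp ⟨hz, hD⟩
    have h2 : A.D x (A.add y z) := A.comm _ _ h1.1 ▸ h1.2
    exact ((A.assoc_iff x y z).mpr ⟨A.comm_def _ _ h1.1, h2⟩).1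

lemma D_zero' (x : E) : A.D x A.zero :=
  A.D_iff'.mpr (by rw [A.zero_compl', A.one_eq]; exact le_top)

lemma add_zero' (x : E) : A.add x A.zero = x := by
  have h1 : A.D (A.compl x) x := A.comm_def _ _ (A.compl_def x)
  have h1' : A.add (A.compl x) x = A.one := by
    rw [← A.comm _ _ (A.compl_def x)]; exact A.compl_add x
  have h2 : A.D (A.add (A.compl x) x) A.zero := A.D_zero' _
  have h3 := (A.assoc_iff (A.compl x) x A.zero).mp ⟨h1, h2⟩
  have h4 : A.add (A.add (A.compl x) x) A.zero
      = A.add (A.compl x) (A.add x A.zero) := A.assoc _ _ _ h1 h2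
  rw [h1'] at h4
  have h5 : A.add A.one A.zero = A.one := by
    rw [← A.one_compl']; exact A.compl_add A.one
  rw [h5] at h4
  have h6 := A.compl_unique (A.compl x) _ h3.2 h4.symm
  rw [h6, A.invol']

lemma zero_add' (x : E) : A.add A.zero x = x := by
  rw [← A.comm x A.zero (A.D_zero' x), A.add_zero']

lemma cancel' {x y z : E} (hxy : A.D x y) (hxz : A.D x z)
    (h : A.add x y = A.add x z) : y = z := by
  have h1 := A.sub' hxy
  have h2 := A.sub' hxz
  rw [← h] at h2
  have h3 := A.sub' h1.1
  rw [h1.2, A.invol'] at h3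
  have h4 := A.sub' h2.1
  rw [h2.2, A.invol'] at h4
  exact A.compl_inj' (h3.2.symm.trans h4.2)

lemma add_le_add_iff' {c t w : E} (hct : A.D c t) (hcw : A.D c w) :
    A.add c t ≤ A.add c w ↔ t ≤ w := by
  constructor
  · intro h
    obtain ⟨r, hr, hadd⟩ := (A.le_iff _ _).mpr h
    have h1 := (A.assoc_iff c t r).mp ⟨hct, hr⟩
    have h2 : A.add c (A.add t r) = A.add c w := by
      rw [← A.assoc _ _ _ hct hr, hadd]
    exact (A.le_iff _ _).mp ⟨r, h1.1, A.cancel' h1.2 hcw h2⟩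
  · intro h
    obtain ⟨r, hr, hadd⟩ := (A.le_iff _ _).mpr h
    have h2 : A.D c (A.add t r) := by rw [hadd]; exact hcw
    have h1 := (A.assoc_iff c t r).mpr ⟨hr, h2⟩
    exact (A.le_iff _ _).mp ⟨r, h1.2, by rw [A.assoc _ _ _ hct h1.2, hadd]⟩

lemma le_compl_iff' {x y : E} : x ≤ A.compl y ↔ y ≤ A.compl x := by
  constructor <;> intro h <;>
    · have := A.anti' h; rwa [A.invol'] at this

lemma compl_le_iff' {x y : E} : A.compl x ≤ y ↔ A.compl y ≤ x := by
  constructor <;> intro h <;>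
    · have := A.anti' h; rwa [A.invol'] at this

end LatticeEffectAlgebra

def odotE {E : Type*} [Lattice E] [BoundedOrder E] (A : LatticeEffectAlgebra E)
    (x y : E) : E := A.compl (A.add (A.compl x) (A.compl y))

def impE {E : Type*} [Lattice E] [BoundedOrder E] (A : LatticeEffectAlgebra E)
    (x y : E) : E := A.add (x ⊓ y) (A.compl x)

lemma impE_bot {E : Type*} [Lattice E] [BoundedOrder E]
    (A : LatticeEffectAlgebra E) (x : E) : impE A x ⊥ = A.compl x := by
  unfold impE
  rw [inf_bot_eq, ← A.zero_eq, A.zero_add']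

lemma compl_odotE {E : Type*} [Lattice E] [BoundedOrder E]
    (A : LatticeEffectAlgebra E) (x y : E) :
    A.compl (odotE A x y) = A.add (A.compl x) (A.compl y) := by
  unfold odotE; rw [A.invol']

/-- Every lattice effect algebra can be organized into a divisible commutative
quasiresiduated lattice via `x ⊙ y := (x' + y')'` (defined iff `x' ≤ y`) and
`x → y := (x ∧ y) + x'`. -/
theorem latticeEffectAlgebra_to_commQRL {E : Type*} [Lattice E] [BoundedOrder E]
    (A : LatticeEffectAlgebra E) :
    ∃ Q : CommQRL E,
      (∀ x y, A.compl x ≤ y →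
        Q.odot x y = A.compl (A.add (A.compl x) (A.compl y))) ∧
      (∀ x y, Q.imp x y = A.add (x ⊓ y) (A.compl x)) ∧
      (∀ x y, x ≤ y → Q.odot y (Q.imp y x) = x) := by
  refine ⟨{
    odot := odotE A
    imp := impE A
    odot_top := fun x => by
      show odotE A x ⊤ = x
      unfold odotE
      rw [A.compl_top', ← A.zero_eq, A.add_zero', A.invol']
    top_odot := fun x => by
      show odotE A ⊤ x = x
      unfold odotE
      rw [A.compl_top', ← A.zero_eq, A.zero_add', A.invol']
    comm_def := fun x y h => by
      rw [impE_bot] at h ⊢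
      exact A.compl_le_iff'.mp h
    comm := fun x y h => by
      rw [impE_bot] at h
      have hD : A.D (A.compl x) (A.compl y) :=
        A.D_iff'.mpr (by rw [A.invol']; exact h)
      show odotE A x y = odotE A y x
      unfold odotE
      rw [A.comm _ _ hD]
    assoc_iff := fun x y z => by
      rw [impE_bot, impE_bot, impE_bot, compl_odotE]
      have e1 : (A.compl x ≤ y) ↔ A.D (A.compl x) (A.compl y) := by
        rw [A.D_iff', A.invol']
      have e2 : (A.add (A.compl x) (A.compl y) ≤ z) ↔
          A.D (A.add (A.compl x) (A.compl y)) (A.compl z) := by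
        rw [A.D_iff', A.invol']
      have e3 : (A.compl y ≤ z) ↔ A.D (A.compl y) (A.compl z) := by
        rw [A.D_iff', A.invol']
      have e4 : (A.compl x ≤ odotE A y z) ↔
          A.D (A.compl x) (A.add (A.compl y) (A.compl z)) := by
        unfold odotE; rw [A.D_iff']
      rw [e1, e2, e3, e4]
      exact A.assoc_iff _ _ _
    assoc := fun x y z h1 h2 => by
      rw [impE_bot] at h1
      rw [impE_bot, compl_odotE] at h2
      have hD1 : A.D (A.compl x) (A.compl y) :=
        A.D_iff'.mpr (by rw [A.invol']; exact h1)
      have hD2 : A.D (A.add (A.compl x) (A.compl y)) (A.compl z) :=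
        A.D_iff'.mpr (by rw [A.invol']; exact h2)
      show odotE A (odotE A x y) z = odotE A x (odotE A y z)
      unfold odotE
      rw [A.invol', A.invol']
      exact congrArg A.compl (A.assoc _ _ _ hD1 hD2)
    invol := fun x => by rw [impE_bot, impE_bot, A.invol']
    anti := fun x y h => by rw [impE_bot, impE_bot]; exact A.anti' h
    quasiadj := fun x y z => by
      rw [impE_bot]
      show odotE A (x ⊔ A.compl y) y ≤ y ⊓ z ↔ x ⊔ A.compl y ≤ impE A y z
      unfold odotE impE
      have hD_uy : A.D (A.compl (x ⊔ A.compl y)) (A.compl y) :=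
        A.D_iff'.mpr (A.anti' le_sup_right)
      have hD_ay : A.D (y ⊓ z) (A.compl y) :=
        A.D_iff'.mpr (by rw [A.invol']; exact inf_le_left)
      have hsub := A.sub' hD_ay
      rw [A.compl_le_iff', ← hsub.2, A.comm _ _ hD_uy,
        A.add_le_add_iff' hsub.1 (A.comm_def _ _ hD_uy), A.le_compl_iff',
        A.invol'] }, fun _ _ _ => rfl, fun _ _ => rfl, ?_⟩
  intro x y h
  show odotE A y (impE A y x) = x
  unfold odotE impE
  have hD : A.D x (A.compl y) := A.D_iff'.mpr (by rw [A.invol']; exact h)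
  rw [inf_eq_right.mpr h]
  have hsub := A.sub' hD
  rw [hsub.2, A.invol']
end

section
/- In the commutative quasiresiduated lattice constructed from a lattice effect algebra (with x → y := (x ∧ y) + x'), quasiadjointness holds: (x ∨ y') ⊙ y ≤ y ∧ z if and only if x ∨ y' ≤ y → z. -/
section Aux

variable {E : Type*} [Lattice E] [BoundedOrder E] (A : LatticeEffectAlgebra E)

lemma LEA_compl_compl (x : E) : A.compl (A.compl x) = x := by
  exact (A.compl_unique (A.compl x) x (A.comm_def _ _ (A.compl_def x))
    (by rw [A.comm _ _ (A.comm_def _ _ (A.compl_def x)), A.compl_add])).symm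

lemma LEA_D_of_le {u v : E} (h : v ≤ A.compl u) : A.D u v := by
  obtain ⟨w, hD, hadd⟩ := (A.le_iff v _).mpr h
  have h2 : A.D u (A.add v w) := by rw [hadd]; exact A.compl_def u
  exact ((A.assoc_iff u v w).mpr ⟨hD, h2⟩).1

lemma LEA_compl_antitone {u v : E} (h : u ≤ v) : A.compl v ≤ A.compl u := by
  obtain ⟨w, hD, hadd⟩ := (A.le_iff u v).mpr h
  have h1 : A.D (A.add u w) (A.compl v) := by rw [hadd]; exact A.compl_def v
  have h2 := (A.assoc_iff u w (A.compl v)).mp ⟨hD, h1⟩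
  have h3 : A.add u (A.add w (A.compl v)) = A.one := by
    rw [← A.assoc u w (A.compl v) hD h1, hadd, A.compl_add]
  have h4 : A.add w (A.compl v) = A.compl u := A.compl_unique u _ h2.2 h3
  refine (A.le_iff _ _).mp ⟨w, A.comm_def _ _ h2.1, ?_⟩
  rw [A.comm _ _ (A.comm_def _ _ h2.1), h4]

lemma LEA_le_compl_iff {u v : E} : u ≤ v ↔ A.compl v ≤ A.compl u := by
  constructor
  · exact LEA_compl_antitone A
  · intro h
    have := LEA_compl_antitone A h
    rwa [LEA_compl_compl, LEA_compl_compl] at this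

lemma LEA_cancel {u v w : E} (h1 : A.D u v) (h2 : A.D u w)
    (h : A.add u v = A.add u w) : v = w := by
  have key : ∀ t : E, A.D u t → t = A.compl (A.add u (A.compl (A.add u t))) := by
    intro t hD
    have hs : A.D (A.add u t) (A.compl (A.add u t)) := A.compl_def _
    have hs' : A.D (A.add t u) (A.compl (A.add u t)) := by
      rwa [A.comm _ _ (A.comm_def _ _ hD)]
    have hDtu := A.comm_def _ _ hD
    have h5 := (A.assoc_iff t u (A.compl (A.add u t))).mp ⟨hDtu, hs'⟩
    have h6 : A.add t (A.add u (A.compl (A.add u t))) = A.one := by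
      rw [← A.assoc t u _ hDtu hs', A.comm _ _ hDtu, A.compl_add]
    have h7 := A.compl_unique t _ h5.2 h6
    rw [h7]; exact (LEA_compl_compl A t).symm
  rw [key v h1, key w h2, h]

lemma LEA_add_le_add_left {u v w : E} (hD : A.D u w) (h : v ≤ w) :
    A.D u v ∧ A.add u v ≤ A.add u w := by
  obtain ⟨t, hvt, hadd⟩ := (A.le_iff v w).mpr h
  have h2 : A.D u (A.add v t) := by rw [hadd]; exact hD
  have h3 := (A.assoc_iff u v t).mpr ⟨hvt, h2⟩
  refine ⟨h3.1, (A.le_iff _ _).mp ⟨t, h3.2, ?_⟩⟩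
  rw [A.assoc u v t h3.1 h3.2, hadd]

lemma LEA_cancel_le {u v w : E} (hDv : A.D u v) (hDw : A.D u w)
    (h : A.add u v ≤ A.add u w) : v ≤ w := by
  obtain ⟨t, hDt, hadd⟩ := (A.le_iff _ _).mpr h
  have h2 := (A.assoc_iff u v t).mp ⟨hDv, hDt⟩
  have h3 : A.add u (A.add v t) = A.add u w := by
    rw [← A.assoc u v t hDv hDt, hadd]
  have h4 : A.add v t = w := LEA_cancel A h2.2 hDw h3
  exact (A.le_iff _ _).mp ⟨t, h2.1, h4⟩

end Aux

/-- Quasiadjointness in the quasiresiduated lattice constructed from a lattice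
effect algebra: `(x ∨ y') ⊙ y ≤ y ∧ z` iff `x ∨ y' ≤ y → z`, where
`a ⊙ b = (a' + b')'` and `y → z = (y ∧ z) + y'`. -/
theorem quasiadjointness_of_LEA {E : Type*} [Lattice E] [BoundedOrder E]
    (A : LatticeEffectAlgebra E) (x y z : E) :
    A.compl (A.add (A.compl (x ⊔ A.compl y)) (A.compl y)) ≤ y ⊓ z ↔
      x ⊔ A.compl y ≤ A.add (y ⊓ z) (A.compl y) := by
  set a := x ⊔ A.compl y with ha
  set c := y ⊓ z with hc
  -- D (compl a) (compl y)
  have hDa : A.D (A.compl a) (A.compl y) := by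
    apply LEA_D_of_le
    rw [LEA_compl_compl]
    exact le_sup_right
  -- D c (compl y) via D (compl y) c
  have hDyc : A.D (A.compl y) c := by
    apply LEA_D_of_le
    rw [LEA_compl_compl]
    exact inf_le_left
  have hDc : A.D c (A.compl y) := A.comm_def _ _ hDyc
  set d := A.compl (A.add c (A.compl y)) with hd
  -- compl c = compl y + d
  have hse : A.D (A.add c (A.compl y)) d := A.compl_def _
  have h5 := (A.assoc_iff c (A.compl y) d).mp ⟨hDc, hse⟩
  have hc' : A.add (A.compl y) d = A.compl c := by
    apply A.compl_unique c _ h5.2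
    rw [← A.assoc c (A.compl y) d hDc hse, A.compl_add]
  have hDyd : A.D (A.compl y) d := h5.1
  have hDya : A.D (A.compl y) (A.compl a) := A.comm_def _ _ hDa
  constructor
  · intro h
    -- compl c ≤ compl a + compl y
    have h1 : A.compl c ≤ A.add (A.compl a) (A.compl y) := by
      have := LEA_compl_antitone A h
      rwa [LEA_compl_compl] at this
    rw [← hc', A.comm _ _ hDa] at h1
    have h2 : d ≤ A.compl a := LEA_cancel_le A hDyd hDya h1
    have h3 := LEA_compl_antitone A h2
    rw [LEA_compl_compl, LEA_compl_compl] at h3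
    exact h3
  · intro h
    -- a ≤ c + compl y  →  d ≤ compl a
    have h2 : d ≤ A.compl a := LEA_compl_antitone A h
    have h3 := (LEA_add_le_add_left A hDya h2).2
    rw [hc', A.comm _ _ hDya] at h3
    -- compl c ≤ compl a + compl y, so compl (compl a + compl y) ≤ c
    have h4 := LEA_compl_antitone A h3
    rwa [LEA_compl_compl] at h4
end

section
/- In a commutative quasiresiduated lattice C, for all a,b: a ⊙ b = 0 if and only if b = a'. -/
/-- In a commutative quasiresiduated lattice, `a ⊙ b = 0` (with `a ⊙ b`
defined, i.e. `a' ≤ b`) if and only if `b = a'`. -/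
theorem odot_eq_bot_iff {C : Type*} [Lattice C] [BoundedOrder C]
    (Q : CommQRL C) (a b : C) :
    (Q.imp a ⊥ ≤ b ∧ Q.odot a b = ⊥) ↔ b = Q.imp a ⊥ := by
  constructor
  · rintro ⟨hle, hz⟩
    refine le_antisymm ?_ hle
    -- use quasiadj with x := b, y := a, z := ⊥
    have hcomm : Q.odot a b = Q.odot b a := Q.comm a b hle
    have h := (Q.quasiadj b a ⊥).mp
    have hsup : b ⊔ Q.imp a ⊥ = b := sup_eq_left.mpr hle
    rw [hsup] at h
    have : Q.odot b a ≤ a ⊓ ⊥ := by rw [← hcomm, hz]; simp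
    have := h this
    simpa using this
  · rintro rfl
    refine ⟨le_rfl, le_antisymm ?_ bot_le⟩
    have h := (Q.quasiadj a (Q.imp a ⊥) ⊥).mpr
    rw [Q.invol, sup_idem] at h
    have := h le_rfl
    exact le_trans this inf_le_right
end

section
/- Let C be a commutative quasiresiduated lattice. Define x + y := (x' ⊙ y')' whenever x ≤ y'. Then (C,+,',0,1) is a lattice effect algebra whose induced order coincides with the lattice order of C. -/
section Aux
variable {C : Type*} [Lattice C] [BoundedOrder C] (Q : CommQRL C)

lemma CQRL_anti' {x y : C} (h : Q.imp x ⊥ ≤ Q.imp y ⊥) : y ≤ x := by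
  have := Q.anti _ _ h
  rwa [Q.invol, Q.invol] at this

lemma CQRL_n_le {x y : C} (h : x ≤ Q.imp y ⊥) : y ≤ Q.imp x ⊥ := by
  have := Q.anti _ _ h
  rw [Q.invol] at this
  exact this

lemma CQRL_n_bot : Q.imp ⊥ ⊥ = ⊤ := by
  have := Q.anti ⊥ (Q.imp ⊤ ⊥) bot_le
  rw [Q.invol] at this
  exact top_unique this

lemma CQRL_n_top : Q.imp ⊤ ⊥ = ⊥ := by
  have := Q.invol ⊥
  rw [CQRL_n_bot Q] at this
  exact this

lemma CQRL_imp_top (y : C) : Q.imp y ⊤ = ⊤ := by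
  have h := (Q.quasiadj ⊤ y ⊤).mp
  simp only [top_sup_eq, Q.top_odot, inf_top_eq, le_refl, true_implies] at h
  exact top_unique h

lemma CQRL_n_odot_self (y : C) : Q.odot (Q.imp y ⊥) y = ⊥ := by
  have h := (Q.quasiadj ⊥ y ⊥).mpr
  simp only [bot_sup_eq, inf_bot_eq, le_refl, true_implies, le_bot_iff] at h
  exact h

lemma CQRL_odot_self_n (y : C) : Q.odot y (Q.imp y ⊥) = ⊥ := by
  rw [Q.comm y (Q.imp y ⊥) le_rfl, CQRL_n_odot_self]

lemma CQRL_odot_le_right {a b : C} (h : Q.imp a ⊥ ≤ b) : Q.odot a b ≤ b := by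
  have hba : Q.imp b ⊥ ≤ a := Q.comm_def _ _ h
  have hq := (Q.quasiadj a b ⊤).mpr
  rw [sup_eq_left.mpr hba, CQRL_imp_top, inf_top_eq] at hq
  exact hq le_top

lemma CQRL_odot_le_left {a b : C} (h : Q.imp a ⊥ ≤ b) : Q.odot a b ≤ a := by
  rw [Q.comm a b h]
  exact CQRL_odot_le_right Q (Q.comm_def _ _ h)

lemma CQRL_odot_eq_bot_iff {u y : C} (h : Q.imp u ⊥ ≤ y) :
    Q.odot u y = ⊥ ↔ u ≤ Q.imp y ⊥ := by
  have hyu : Q.imp y ⊥ ≤ u := Q.comm_def _ _ h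
  have hq := Q.quasiadj u y ⊥
  rw [sup_eq_left.mpr hyu, inf_bot_eq, le_bot_iff] at hq
  exact hq

lemma CQRL_key {a b : C} (h : b ≤ a) :
    Q.odot a (Q.imp (Q.odot a (Q.imp b ⊥)) ⊥) = b := by
  have hab : Q.imp a ⊥ ≤ Q.imp b ⊥ := Q.anti b a h
  have hb' : Q.imp (Q.imp b ⊥) ⊥ ≤ a := by rw [Q.invol]; exact h
  have hq1 : Q.odot a (Q.imp b ⊥) = Q.odot (Q.imp b ⊥) a := Q.comm _ _ hab
  have hai := (Q.assoc_iff (Q.imp b ⊥) a (Q.imp (Q.odot a (Q.imp b ⊥)) ⊥)).mp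
    ⟨hb', by rw [← hq1]⟩
  have hbr : b ≤ Q.odot a (Q.imp (Q.odot a (Q.imp b ⊥)) ⊥) := by
    have := hai.2
    rwa [Q.invol] at this
  have hassoc := Q.assoc (Q.imp b ⊥) a (Q.imp (Q.odot a (Q.imp b ⊥)) ⊥)
    hb' (by rw [← hq1])
  rw [← hq1, CQRL_odot_self_n] at hassoc
  have h5 : Q.imp b ⊥ ≤ Q.imp (Q.odot a (Q.imp (Q.odot a (Q.imp b ⊥)) ⊥)) ⊥ :=
    (CQRL_odot_eq_bot_iff Q (by rw [Q.invol]; exact hbr)).mp hassoc.symm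
  exact le_antisymm (CQRL_anti' Q h5) hbr

end Aux

/-- Every commutative quasiresiduated lattice can be converted into a lattice
effect algebra via `x + y := (x' ⊙ y')'` (defined iff `x ≤ y'`), whose induced
order coincides with the lattice order. -/
theorem commQRL_to_latticeEffectAlgebra {C : Type*} [Lattice C] [BoundedOrder C]
    (Q : CommQRL C) :
    ∃ A : EffectAlgebra C,
      (∀ x y, A.D x y ↔ x ≤ Q.imp y ⊥) ∧
      (∀ x y, A.D x y →
        A.add x y = Q.imp (Q.odot (Q.imp x ⊥) (Q.imp y ⊥)) ⊥) ∧
      (∀ x, A.compl x = Q.imp x ⊥) ∧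
      A.zero = ⊥ ∧ A.one = ⊤ ∧
      (∀ x y, A.le x y ↔ x ≤ y) := by
  refine ⟨{
    D := fun x y => x ≤ Q.imp y ⊥
    add := fun x y => Q.imp (Q.odot (Q.imp x ⊥) (Q.imp y ⊥)) ⊥
    compl := fun x => Q.imp x ⊥
    zero := ⊥
    one := ⊤
    comm_def := fun x y h => by
      have := Q.comm_def (Q.imp x ⊥) (Q.imp y ⊥) (by rw [Q.invol]; exact h)
      rwa [Q.invol] at this
    comm := fun x y h => by
      rw [Q.comm (Q.imp x ⊥) (Q.imp y ⊥) (by rw [Q.invol]; exact h)]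
    assoc_iff := fun x y z => by
      have := Q.assoc_iff (Q.imp x ⊥) (Q.imp y ⊥) (Q.imp z ⊥)
      simp only [Q.invol] at this ⊢
      exact this
    assoc := fun x y z h1 h2 => by
      simp only [Q.invol]
      rw [Q.assoc _ _ _ (by rw [Q.invol]; exact h1) h2]
    compl_def := fun x => by rw [Q.invol]
    compl_add := fun x => by
      rw [Q.invol, CQRL_n_odot_self Q, CQRL_n_bot Q]
    compl_unique := fun x u hd hadd => by
      have hb : Q.odot (Q.imp x ⊥) (Q.imp u ⊥) = ⊥ := by
        have := congrArg (fun t => Q.imp t ⊥) hadd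
        rwa [Q.invol, CQRL_n_top Q] at this
      have hux : u ≤ Q.imp x ⊥ := by
        have := Q.comm_def (Q.imp x ⊥) (Q.imp u ⊥) (by rw [Q.invol]; exact hd)
        rwa [Q.invol] at this
      have hxu : Q.imp x ⊥ ≤ u :=
        by
        have := (CQRL_odot_eq_bot_iff Q (u := Q.imp x ⊥) (y := Q.imp u ⊥)
          (by rw [Q.invol]; exact hd)).mp hb
        rwa [Q.invol] at this
      exact le_antisymm hux hxu
    one_add := fun x h => by
      have hx : Q.imp x ⊥ = ⊤ := top_unique h
      have := Q.invol x
      rw [hx, CQRL_n_top Q] at this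
      exact this.symm }, fun x y => Iff.rfl, fun x y _ => rfl, fun x => rfl,
    rfl, rfl, fun x y => ?_⟩
  constructor
  · rintro ⟨z, hd, rfl⟩
    have hle : Q.odot (Q.imp x ⊥) (Q.imp z ⊥) ≤ Q.imp x ⊥ :=
      CQRL_odot_le_left Q (by rw [Q.invol]; exact hd)
    have := Q.anti _ _ hle
    rwa [Q.invol] at this
  · intro h
    refine ⟨Q.odot (Q.imp x ⊥) y, ?_, ?_⟩
    · have hle : Q.odot (Q.imp x ⊥) y ≤ Q.imp x ⊥ :=
        CQRL_odot_le_left Q (by rw [Q.invol]; exact h)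
      have := Q.anti _ _ hle
      rwa [Q.invol] at this
    · have hkey := CQRL_key Q (a := Q.imp x ⊥) (b := Q.imp y ⊥)
        (Q.anti _ _ h)
      rw [Q.invol] at hkey
      show Q.imp (Q.odot (Q.imp x ⊥) (Q.imp (Q.odot (Q.imp x ⊥) y) ⊥)) ⊥ = y
      rw [hkey, Q.invol]
end

section
/- Let P be a good lattice pseudoeffect algebra. Define x ⊙ y := tilde(bar x + bar y) whenever tilde x ≤ y, x → y := bar x + (x ∧ y), and x ⇝ y := (x ∧ y) + tilde x. Then (P,∨,∧,⊙,→,⇝,0,1) is a divisible quasiresiduated lattice. -/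
/-- A pseudoeffect algebra: partial associative `add` with definedness
predicate `D`, left complement `lcompl` (bar) and right complement `rcompl`
(tilde). -/
structure PseudoEffectAlgebra (P : Type*) where
  D : P → P → Prop
  add : P → P → P
  lcompl : P → P
  rcompl : P → P
  zero : P
  one : P
  P1 : ∀ x y, D x y → ∃ u w, D u x ∧ D y w ∧ add u x = add x y ∧ add y w = add x y
  assoc_iff : ∀ x y z, (D x y ∧ D (add x y) z) ↔ (D y z ∧ D x (add y z))
  assoc : ∀ x y z, D x y → D (add x y) z → add (add x y) z = add x (add y z)
  lcompl_def : ∀ x, D (lcompl x) x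
  lcompl_add : ∀ x, add (lcompl x) x = one
  lcompl_unique : ∀ x u, D u x → add u x = one → u = lcompl x
  rcompl_def : ∀ x, D x (rcompl x)
  rcompl_add : ∀ x, add x (rcompl x) = one
  rcompl_unique : ∀ x w, D x w → add x w = one → w = rcompl x
  one_add : ∀ x, D one x → x = zero
  add_one : ∀ x, D x one → x = zero

/-- The induced order of a pseudoeffect algebra. -/
def PseudoEffectAlgebra.le {P : Type*} (A : PseudoEffectAlgebra P) (x y : P) : Prop :=
  ∃ z, A.D x z ∧ A.add x z = y
/-- A good lattice pseudoeffect algebra: a pseudoeffect algebra whose induced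
order coincides with a given bounded lattice order, satisfying the goodness
condition. -/
structure GoodLatticePseudoEffectAlgebra (P : Type*) [Lattice P] [BoundedOrder P]
    extends PseudoEffectAlgebra P where
  le_iff : ∀ x y, (∃ z, D x z ∧ add x z = y) ↔ x ≤ y
  zero_eq : zero = ⊥
  one_eq : one = ⊤
  good : ∀ x y, rcompl x ≤ y →
    rcompl (add (lcompl x) (lcompl y)) = lcompl (add (rcompl x) (rcompl y))
/-- A (possibly non-commutative) quasiresiduated lattice: bounded lattice with
partial `odot` (defined iff `x̃ ≤ y`, where `x̄ = imp x ⊥`, `x̃ = limp x ⊥`)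
forming a partial monoid with unit `⊤`, full `imp` (→) and `limp` (⇝),
satisfying (Q2)-(Q5). -/
structure QRL (Q : Type*) [Lattice Q] [BoundedOrder Q] where
  odot : Q → Q → Q
  imp : Q → Q → Q
  limp : Q → Q → Q
  odot_top : ∀ x, odot x ⊤ = x
  top_odot : ∀ x, odot ⊤ x = x
  assoc_iff : ∀ x y z,
    (limp x ⊥ ≤ y ∧ limp (odot x y) ⊥ ≤ z) ↔ (limp y ⊥ ≤ z ∧ limp x ⊥ ≤ odot y z)
  assoc : ∀ x y z, limp x ⊥ ≤ y → limp (odot x y) ⊥ ≤ z →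
    odot (odot x y) z = odot x (odot y z)
  invol₁ : ∀ x, limp (imp x ⊥) ⊥ = x
  invol₂ : ∀ x, imp (limp x ⊥) ⊥ = x
  anti₁ : ∀ x y, x ≤ y → imp y ⊥ ≤ imp x ⊥
  anti₂ : ∀ x y, x ≤ y → limp y ⊥ ≤ limp x ⊥
  quasiadj₁ : ∀ x y z,
    odot (x ⊔ imp y ⊥) y ≤ y ⊓ z ↔ x ⊔ imp y ⊥ ≤ imp y z
  quasiadj₂ : ∀ x y z,
    odot y (x ⊔ limp y ⊥) ≤ y ⊓ z ↔ x ⊔ limp y ⊥ ≤ limp y z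
  good : ∀ x y, x ≤ imp y ⊥ →
    limp (odot (imp x ⊥) (imp y ⊥)) ⊥ = imp (odot (limp x ⊥) (limp y ⊥)) ⊥

namespace GLPEAaux

variable {P : Type*} [Lattice P] [BoundedOrder P] (A : GoodLatticePseudoEffectAlgebra P)

lemma tilde_bar (x : P) : A.rcompl (A.lcompl x) = x :=
  (A.rcompl_unique (A.lcompl x) x (A.lcompl_def x) (A.lcompl_add x)).symm

lemma bar_tilde (x : P) : A.lcompl (A.rcompl x) = x :=
  (A.lcompl_unique (A.rcompl x) x (A.rcompl_def x) (A.rcompl_add x)).symm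

lemma bar_inj {x y : P} (h : A.lcompl x = A.lcompl y) : x = y := by
  rw [← tilde_bar A x, h, tilde_bar]

lemma bar_one : A.lcompl A.one = A.zero := A.add_one _ (A.lcompl_def A.one)
lemma tilde_one : A.rcompl A.one = A.zero := A.one_add _ (A.rcompl_def A.one)

lemma D_one_zero : A.D A.one A.zero := by
  have h := A.rcompl_def A.one; rwa [tilde_one] at h
lemma D_zero_one : A.D A.zero A.one := by
  have h := A.lcompl_def A.one; rwa [bar_one] at h
lemma one_add_zero : A.add A.one A.zero = A.one := by
  have h := A.rcompl_add A.one; rwa [tilde_one] at h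
lemma zero_add_one : A.add A.zero A.one = A.one := by
  have h := A.lcompl_add A.one; rwa [bar_one] at h

lemma addZero (x : P) : A.D x A.zero ∧ A.add x A.zero = x := by
  have h1 : A.D (A.lcompl x) x := A.lcompl_def x
  have h2 : A.D (A.add (A.lcompl x) x) A.zero := by
    rw [A.lcompl_add]; exact D_one_zero A
  obtain ⟨hx0, hD⟩ := (A.assoc_iff _ _ _).mp ⟨h1, h2⟩
  have he := A.assoc _ _ _ h1 h2
  rw [A.lcompl_add, one_add_zero] at he
  have h3 := A.rcompl_unique (A.lcompl x) _ hD he.symm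
  rw [tilde_bar] at h3
  exact ⟨hx0, h3⟩

lemma zeroAdd (x : P) : A.D A.zero x ∧ A.add A.zero x = x := by
  have h2 : A.D A.zero (A.add x (A.rcompl x)) := by
    rw [A.rcompl_add]; exact D_zero_one A
  obtain ⟨h0x, hD⟩ := (A.assoc_iff A.zero x (A.rcompl x)).mpr ⟨A.rcompl_def x, h2⟩
  have he := A.assoc _ _ _ h0x hD
  rw [A.rcompl_add, zero_add_one] at he
  have h3 := A.lcompl_unique (A.rcompl x) _ hD he
  rw [bar_tilde] at h3
  exact ⟨h0x, h3⟩

lemma le_left {x y : P} : x ≤ y ↔ ∃ z, A.D z x ∧ A.add z x = y := by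
  constructor
  · intro h
    obtain ⟨z, hD, he⟩ := (A.le_iff x y).mpr h
    obtain ⟨u, w, hu, _, hue, _⟩ := A.P1 x z hD
    exact ⟨u, hu, by rw [hue, he]⟩
  · rintro ⟨z, hD, he⟩
    obtain ⟨u, w, _, hw, _, hwe⟩ := A.P1 z x hD
    exact (A.le_iff x y).mp ⟨w, hw, by rw [hwe, he]⟩

lemma bar_anti {x y : P} (h : x ≤ y) : A.lcompl y ≤ A.lcompl x := by
  obtain ⟨u, hDu, hue⟩ := (le_left A).mp h
  have hD2 : A.D (A.lcompl y) (A.add u x) := by rw [hue]; exact A.lcompl_def y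
  obtain ⟨hD3, hD4⟩ := (A.assoc_iff (A.lcompl y) u x).mpr ⟨hDu, hD2⟩
  have he := A.assoc (A.lcompl y) u x hD3 hD4
  rw [hue, A.lcompl_add] at he
  exact (A.le_iff _ _).mp ⟨u, hD3, A.lcompl_unique x _ hD4 he⟩

lemma tilde_anti {x y : P} (h : x ≤ y) : A.rcompl y ≤ A.rcompl x := by
  obtain ⟨z, hDz, hze⟩ := (A.le_iff x y).mpr h
  have hD2 : A.D (A.add x z) (A.rcompl y) := by rw [hze]; exact A.rcompl_def y
  obtain ⟨hD3, hD4⟩ := (A.assoc_iff x z (A.rcompl y)).mp ⟨hDz, hD2⟩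
  have he := A.assoc x z (A.rcompl y) hDz hD2
  rw [hze, A.rcompl_add] at he
  exact (le_left A).mpr ⟨z, hD3, A.rcompl_unique x _ hD4 he.symm⟩

lemma D_iff_le_tilde {a b : P} : A.D a b ↔ b ≤ A.rcompl a := by
  constructor
  · intro hab
    obtain ⟨c, hDc, hec⟩ := (A.le_iff (A.add a b) ⊤).mpr le_top
    obtain ⟨hbc, haD⟩ := (A.assoc_iff a b c).mp ⟨hab, hDc⟩
    have he := A.assoc a b c hab hDc
    rw [hec, ← A.one_eq] at he
    exact (A.le_iff _ _).mp ⟨c, hbc, A.rcompl_unique a _ haD he.symm⟩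
  · intro h
    obtain ⟨c, hDc, hec⟩ := (A.le_iff b (A.rcompl a)).mpr h
    have hD2 : A.D a (A.add b c) := by rw [hec]; exact A.rcompl_def a
    exact ((A.assoc_iff a b c).mpr ⟨hDc, hD2⟩).1

lemma D_iff_le_bar {a b : P} : A.D a b ↔ a ≤ A.lcompl b := by
  constructor
  · intro hab
    obtain ⟨c, hDc, hec⟩ := (le_left A).mp (le_top : A.add a b ≤ ⊤)
    obtain ⟨hca, hD2⟩ := (A.assoc_iff c a b).mpr ⟨hab, hDc⟩
    have he := A.assoc c a b hca hD2
    rw [hec, ← A.one_eq] at he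
    exact (le_left A).mpr ⟨c, hca, A.lcompl_unique b _ hD2 he⟩
  · intro h
    obtain ⟨c, hDc, hec⟩ := (le_left A).mp h
    have hD2 : A.D (A.add c a) b := by rw [hec]; exact A.lcompl_def b
    exact ((A.assoc_iff c a b).mp ⟨hDc, hD2⟩).1

/-- Monotonicity of addition on the left. -/
lemma add_le_left {a b c : P} (hac : A.D a c) (h : b ≤ c) :
    A.D a b ∧ A.add a b ≤ A.add a c := by
  obtain ⟨d, hbd, hed⟩ := (A.le_iff b c).mpr h
  have hD2 : A.D a (A.add b d) := by rw [hed]; exact hac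
  obtain ⟨hab, habd⟩ := (A.assoc_iff a b d).mpr ⟨hbd, hD2⟩
  have he := A.assoc a b d hab habd
  rw [hed] at he
  exact ⟨hab, (A.le_iff _ _).mp ⟨d, habd, he⟩⟩

/-- Monotonicity of addition on the right. -/
lemma add_le_right {a b c : P} (hca : A.D c a) (h : b ≤ c) :
    A.D b a ∧ A.add b a ≤ A.add c a := by
  obtain ⟨d, hdb, hed⟩ := (le_left A).mp h
  have hD2 : A.D (A.add d b) a := by rw [hed]; exact hca
  obtain ⟨hba, hd2⟩ := (A.assoc_iff d b a).mp ⟨hdb, hD2⟩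
  have he := A.assoc d b a hdb hD2
  rw [hed] at he
  exact ⟨hba, (le_left A).mpr ⟨d, hd2, he.symm⟩⟩

lemma cancel_left {a b c : P} (hab : A.D a b) (hac : A.D a c)
    (he : A.add a b = A.add a c) : b = c := by
  have hW : A.D (A.lcompl (A.add a b)) (A.add a b) := A.lcompl_def _
  have hW2 : A.D (A.lcompl (A.add a b)) (A.add a c) := he ▸ hW
  obtain ⟨h1, h2⟩ := (A.assoc_iff (A.lcompl (A.add a b)) a b).mpr ⟨hab, hW⟩
  obtain ⟨h1', h2'⟩ := (A.assoc_iff (A.lcompl (A.add a b)) a c).mpr ⟨hac, hW2⟩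
  have e1 := A.assoc _ a b h1 h2
  have e2 := A.assoc _ a c h1' h2'
  rw [A.lcompl_add] at e1
  rw [← he, A.lcompl_add] at e2
  exact bar_inj A ((A.lcompl_unique b _ h2 e1).symm.trans (A.lcompl_unique c _ h2' e2))

lemma tilde_inj {x y : P} (h : A.rcompl x = A.rcompl y) : x = y := by
  rw [← bar_tilde A x, h, bar_tilde]

lemma cancel_right {a b c : P} (hba : A.D b a) (hca : A.D c a)
    (he : A.add b a = A.add c a) : b = c := by
  have hW : A.D (A.add b a) (A.rcompl (A.add b a)) := A.rcompl_def _
  have hW2 : A.D (A.add c a) (A.rcompl (A.add b a)) := he ▸ hW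
  obtain ⟨h1, h2⟩ := (A.assoc_iff b a (A.rcompl (A.add b a))).mp ⟨hba, hW⟩
  obtain ⟨h1', h2'⟩ := (A.assoc_iff c a (A.rcompl (A.add b a))).mp ⟨hca, hW2⟩
  have e1 := A.assoc b a _ hba hW
  have e2 := A.assoc c a _ hca hW2
  rw [A.rcompl_add] at e1
  rw [← he, A.rcompl_add] at e2
  exact tilde_inj A ((A.rcompl_unique b _ h2 e1.symm).symm.trans (A.rcompl_unique c _ h2' e2.symm))

lemma le_cancel_left {a b c : P} (hab : A.D a b) (hac : A.D a c)
    (h : A.add a b ≤ A.add a c) : b ≤ c := by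
  obtain ⟨d, hd, hed⟩ := (A.le_iff _ _).mpr h
  obtain ⟨hbd, habd⟩ := (A.assoc_iff a b d).mp ⟨hab, hd⟩
  have he := A.assoc a b d hab hd
  rw [hed] at he
  have : A.add b d = c := cancel_left A habd hac he.symm
  exact (A.le_iff b c).mp ⟨d, hbd, this⟩

lemma le_cancel_right {a b c : P} (hba : A.D b a) (hca : A.D c a)
    (h : A.add b a ≤ A.add c a) : b ≤ c := by
  obtain ⟨d, hd, hed⟩ := (le_left A).mp h
  obtain ⟨hdb, hdba⟩ := (A.assoc_iff d b a).mpr ⟨hba, hd⟩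
  have he := A.assoc d b a hdb hdba
  rw [hed] at he
  have : A.add d b = c := cancel_right A hdba hca he
  exact (le_left A).mpr ⟨d, hdb, this⟩

/-- The product operation. -/
def odot (a b : P) : P := A.rcompl (A.add (A.lcompl a) (A.lcompl b))
/-- The implication. -/
def imp (a b : P) : P := A.add (A.lcompl a) (a ⊓ b)
/-- The coimplication. -/
def limp (a b : P) : P := A.add (a ⊓ b) (A.rcompl a)

lemma imp_bot (a : P) : imp A a ⊥ = A.lcompl a := by
  show A.add (A.lcompl a) (a ⊓ ⊥) = A.lcompl a
  rw [inf_bot_eq, ← A.zero_eq]; exact (addZero A _).2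

lemma limp_bot (a : P) : limp A a ⊥ = A.rcompl a := by
  show A.add (a ⊓ ⊥) (A.rcompl a) = A.rcompl a
  rw [inf_bot_eq, ← A.zero_eq]; exact (zeroAdd A _).2

lemma good' {a b : P} (h : A.rcompl a ≤ b) :
    odot A a b = A.lcompl (A.add (A.rcompl a) (A.rcompl b)) := A.good a b h

lemma tilde_odot {a b : P} (h : A.rcompl a ≤ b) :
    A.rcompl (odot A a b) = A.add (A.rcompl a) (A.rcompl b) := by
  rw [good' A h, tilde_bar]

lemma D_tt {a b : P} (h : A.rcompl a ≤ b) : A.D (A.rcompl a) (A.rcompl b) :=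
  (D_iff_le_bar A).mpr (by rw [bar_tilde]; exact h)

lemma bar_top : A.lcompl ⊤ = A.zero := by rw [← A.one_eq]; exact bar_one A

lemma odotTop (x : P) : odot A x ⊤ = x := by
  show A.rcompl (A.add (A.lcompl x) (A.lcompl ⊤)) = x
  rw [bar_top, (addZero A _).2, tilde_bar]

lemma topOdot (x : P) : odot A ⊤ x = x := by
  show A.rcompl (A.add (A.lcompl ⊤) (A.lcompl x)) = x
  rw [bar_top, (zeroAdd A _).2, tilde_bar]

lemma qrl_assoc_iff (x y z : P) :
    (A.rcompl x ≤ y ∧ A.rcompl (odot A x y) ≤ z) ↔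
      (A.rcompl y ≤ z ∧ A.rcompl x ≤ odot A y z) := by
  constructor
  · rintro ⟨h1, h2⟩
    have hDxy : A.D (A.rcompl x) (A.rcompl y) := D_tt A h1
    rw [tilde_odot A h1] at h2
    have hty : A.rcompl y ≤ z :=
      le_trans ((le_left A).mpr ⟨A.rcompl x, hDxy, rfl⟩) h2
    refine ⟨hty, ?_⟩
    have hD2 : A.D (A.add (A.rcompl x) (A.rcompl y)) (A.rcompl z) :=
      (D_iff_le_bar A).mpr (by rw [bar_tilde]; exact h2)
    obtain ⟨hDyz, hDx⟩ := (A.assoc_iff _ _ _).mp ⟨hDxy, hD2⟩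
    rw [good' A hty]
    exact (D_iff_le_bar A).mp hDx
  · rintro ⟨h1, h2⟩
    have hDyz : A.D (A.rcompl y) (A.rcompl z) := D_tt A h1
    rw [good' A h1] at h2
    have hDx : A.D (A.rcompl x) (A.add (A.rcompl y) (A.rcompl z)) :=
      (D_iff_le_bar A).mpr h2
    obtain ⟨hDxy, hD2⟩ := (A.assoc_iff _ _ _).mpr ⟨hDyz, hDx⟩
    have h1' : A.rcompl x ≤ y := by
      have h := (D_iff_le_bar A).mp hDxy; rwa [bar_tilde] at h
    refine ⟨h1', ?_⟩
    rw [tilde_odot A h1']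
    have h := (D_iff_le_bar A).mp hD2; rwa [bar_tilde] at h

lemma qrl_assoc (x y z : P) (h1 : A.rcompl x ≤ y) (h2 : A.rcompl (odot A x y) ≤ z) :
    odot A (odot A x y) z = odot A x (odot A y z) := by
  obtain ⟨hty, htx2⟩ := (qrl_assoc_iff A x y z).mp ⟨h1, h2⟩
  have h2' : A.add (A.rcompl x) (A.rcompl y) ≤ z := by
    rwa [tilde_odot A h1] at h2
  have hDxy : A.D (A.rcompl x) (A.rcompl y) := D_tt A h1
  have hD2 : A.D (A.add (A.rcompl x) (A.rcompl y)) (A.rcompl z) :=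
    (D_iff_le_bar A).mpr (by rw [bar_tilde]; exact h2')
  rw [good' A h2, tilde_odot A h1, good' A htx2, tilde_odot A hty]
  exact congrArg A.lcompl (A.assoc _ _ _ hDxy hD2)

/-- Key identity for the first quasi-adjointness. -/
lemma key1 {u y : P} (h : A.lcompl y ≤ u) :
    A.D (A.lcompl y) (A.rcompl (A.add (A.lcompl u) (A.lcompl y))) ∧
      A.add (A.lcompl y) (A.rcompl (A.add (A.lcompl u) (A.lcompl y))) = u := by
  have hD : A.D (A.lcompl u) (A.lcompl y) :=
    (D_iff_le_tilde A).mpr (by rw [tilde_bar]; exact h)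
  have h2 : A.D (A.add (A.lcompl u) (A.lcompl y))
      (A.rcompl (A.add (A.lcompl u) (A.lcompl y))) := A.rcompl_def _
  obtain ⟨h3, h4⟩ := (A.assoc_iff _ _ _).mp ⟨hD, h2⟩
  have he := A.assoc _ _ _ hD h2
  rw [A.rcompl_add] at he
  have h5 := A.rcompl_unique (A.lcompl u) _ h4 he.symm
  rw [tilde_bar] at h5
  exact ⟨h3, h5⟩

/-- Key identity for the second quasi-adjointness. -/
lemma key2 {u y : P} (h : A.rcompl y ≤ u) :
    A.D (A.lcompl (A.add (A.rcompl y) (A.rcompl u))) (A.rcompl y) ∧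
      A.add (A.lcompl (A.add (A.rcompl y) (A.rcompl u))) (A.rcompl y) = u := by
  have hD : A.D (A.rcompl y) (A.rcompl u) :=
    (D_iff_le_bar A).mpr (by rw [bar_tilde]; exact h)
  have h2 : A.D (A.lcompl (A.add (A.rcompl y) (A.rcompl u)))
      (A.add (A.rcompl y) (A.rcompl u)) := A.lcompl_def _
  obtain ⟨h3, h4⟩ := (A.assoc_iff _ _ _).mpr ⟨hD, h2⟩
  have he := A.assoc _ _ _ h3 h4
  rw [A.lcompl_add] at he
  have h5 := A.lcompl_unique (A.rcompl u) _ h4 he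
  rw [bar_tilde] at h5
  exact ⟨h3, h5⟩

lemma qrl_quasiadj₁ (x y z : P) :
    odot A (x ⊔ A.lcompl y) y ≤ y ⊓ z ↔ x ⊔ A.lcompl y ≤ imp A y z := by
  have hu : A.lcompl y ≤ x ⊔ A.lcompl y := le_sup_right
  have hm : y ⊓ z ≤ y := inf_le_left
  have hDm : A.D (A.lcompl y) (y ⊓ z) :=
    (D_iff_le_tilde A).mpr (by rw [tilde_bar]; exact hm)
  obtain ⟨hDs, hes⟩ := key1 A hu
  show A.rcompl (A.add (A.lcompl (x ⊔ A.lcompl y)) (A.lcompl y)) ≤ y ⊓ z ↔ _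
  constructor
  · intro h
    have h2 := (add_le_left A hDm h).2
    rw [hes] at h2
    exact h2
  · intro h
    rw [← hes] at h
    exact le_cancel_left A hDs hDm h

lemma qrl_quasiadj₂ (x y z : P) :
    odot A y (x ⊔ A.rcompl y) ≤ y ⊓ z ↔ x ⊔ A.rcompl y ≤ limp A y z := by
  have hu : A.rcompl y ≤ x ⊔ A.rcompl y := le_sup_right
  have hm : y ⊓ z ≤ y := inf_le_left
  have hDm : A.D (y ⊓ z) (A.rcompl y) :=
    (D_iff_le_tilde A).mpr (tilde_anti A hm)
  obtain ⟨hDs, hes⟩ := key2 A hu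
  rw [good' A hu]
  constructor
  · intro h
    have h2 := (add_le_right A hDm h).2
    rw [hes] at h2
    exact h2
  · intro h
    rw [← hes] at h
    exact le_cancel_right A hDs hDm h

lemma qrl_good (x y : P) (h : x ≤ A.lcompl y) :
    A.rcompl (odot A (A.lcompl x) (A.lcompl y)) =
      A.lcompl (odot A (A.rcompl x) (A.rcompl y)) := by
  have h' : A.rcompl (A.lcompl x) ≤ A.lcompl y := by rw [tilde_bar]; exact h
  rw [good' A h', tilde_bar, tilde_bar, tilde_bar]
  show A.add x y = A.lcompl (A.rcompl (A.add (A.lcompl (A.rcompl x)) (A.lcompl (A.rcompl y))))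
  rw [bar_tilde, bar_tilde, bar_tilde]

lemma div1 {x y : P} (h : x ≤ y) : odot A (imp A y x) y = x := by
  have hm : y ⊓ x = x := inf_eq_right.mpr h
  have himp : imp A y x = A.add (A.lcompl y) x := by
    show A.add (A.lcompl y) (y ⊓ x) = _; rw [hm]
  have hDp : A.D (A.lcompl y) x :=
    (D_iff_le_tilde A).mpr (by rw [tilde_bar]; exact h)
  have hW : A.D (A.lcompl (A.add (A.lcompl y) x)) (A.add (A.lcompl y) x) :=
    A.lcompl_def _
  obtain ⟨h1, h2⟩ :=
    (A.assoc_iff (A.lcompl (A.add (A.lcompl y) x)) (A.lcompl y) x).mpr ⟨hDp, hW⟩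
  have he := A.assoc _ _ _ h1 h2
  rw [A.lcompl_add] at he
  have h3 := A.lcompl_unique x _ h2 he
  rw [himp]
  show A.rcompl (A.add (A.lcompl (A.add (A.lcompl y) x)) (A.lcompl y)) = x
  rw [h3, tilde_bar]

lemma div2 {x y : P} (h : x ≤ y) : odot A y (limp A y x) = x := by
  have hm : y ⊓ x = x := inf_eq_right.mpr h
  have hlimp : limp A y x = A.add x (A.rcompl y) := by
    show A.add (y ⊓ x) (A.rcompl y) = _; rw [hm]
  have hDq : A.D x (A.rcompl y) :=
    (D_iff_le_tilde A).mpr (tilde_anti A h)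
  have htq : A.rcompl y ≤ A.add x (A.rcompl y) :=
    (le_left A).mpr ⟨x, hDq, rfl⟩
  have hW : A.D (A.add x (A.rcompl y)) (A.rcompl (A.add x (A.rcompl y))) :=
    A.rcompl_def _
  obtain ⟨h1, h2⟩ := (A.assoc_iff x (A.rcompl y) _).mp ⟨hDq, hW⟩
  have he := A.assoc x (A.rcompl y) _ hDq hW
  rw [A.rcompl_add] at he
  have h3 := A.rcompl_unique x _ h2 he.symm
  rw [hlimp, good' A htq, h3, bar_tilde]

end GLPEAaux

open GLPEAaux in
/-- Every good lattice pseudoeffect algebra can be organized into a divisible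
quasiresiduated lattice via `x ⊙ y := (x̄ + ȳ)~` (defined iff `x̃ ≤ y`),
`x → y := x̄ + (x ∧ y)` and `x ⇝ y := (x ∧ y) + x̃`. -/
theorem glpea_to_QRL {P : Type*} [Lattice P] [BoundedOrder P]
    (A : GoodLatticePseudoEffectAlgebra P) :
    ∃ Q : QRL P,
      (∀ x y, A.rcompl x ≤ y →
        Q.odot x y = A.rcompl (A.add (A.lcompl x) (A.lcompl y))) ∧
      (∀ x y, Q.imp x y = A.add (A.lcompl x) (x ⊓ y)) ∧
      (∀ x y, Q.limp x y = A.add (x ⊓ y) (A.rcompl x)) ∧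
      (∀ x y, x ≤ y → Q.odot (Q.imp y x) y = x ∧ Q.odot y (Q.limp y x) = x) := by
  refine ⟨{
    odot := odot A
    imp := imp A
    limp := limp A
    odot_top := odotTop A
    top_odot := topOdot A
    assoc_iff := by
      intro x y z
      simp only [limp_bot A]
      exact qrl_assoc_iff A x y z
    assoc := by
      intro x y z h1 h2
      rw [limp_bot A] at h1 h2
      exact qrl_assoc A x y z h1 h2
    invol₁ := by intro x; rw [imp_bot A, limp_bot A, tilde_bar A]
    invol₂ := by intro x; rw [limp_bot A, imp_bot A, bar_tilde A]
    anti₁ := by intro x y h; rw [imp_bot A, imp_bot A]; exact bar_anti A h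
    anti₂ := by intro x y h; rw [limp_bot A, limp_bot A]; exact tilde_anti A h
    quasiadj₁ := by
      intro x y z
      rw [imp_bot A]
      exact qrl_quasiadj₁ A x y z
    quasiadj₂ := by
      intro x y z
      rw [limp_bot A]
      exact qrl_quasiadj₂ A x y z
    good := by
      intro x y h
      rw [imp_bot A] at h
      simp only [imp_bot A, limp_bot A]
      exact qrl_good A x y h }, ?_, ?_, ?_, ?_⟩
  · intro x y _; rfl
  · intro x y; rfl
  · intro x y; rfl
  · intro x y h; exact ⟨div1 A h, div2 A h⟩
end

section
/- In a quasiresiduated lattice Q, for all a,b: a ⊙ b = 0 if and only if b = tilde a, and b ⊙ a = 0 if and only if b = bar a, where bar a := a→0 and tilde a := a⇝0. -/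
/-- In a quasiresiduated lattice: `a ⊙ b = 0` (with `a ⊙ b` defined, i.e.
`ã ≤ b`) iff `b = ã`, and `b ⊙ a = 0` (with `b ⊙ a` defined, i.e. `b̃ ≤ a`)
iff `b = ā`. -/
theorem qrl_odot_eq_bot_iff {C : Type*} [Lattice C] [BoundedOrder C]
    (Q : QRL C) (a b : C) :
    ((Q.limp a ⊥ ≤ b ∧ Q.odot a b = ⊥) ↔ b = Q.limp a ⊥) ∧
    ((Q.limp b ⊥ ≤ a ∧ Q.odot b a = ⊥) ↔ b = Q.imp a ⊥) := by
  have h1 : ∀ x : C, Q.odot x (Q.limp x ⊥) = ⊥ := by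
    intro x
    have := (Q.quasiadj₂ ⊥ x ⊥).mpr (by simp)
    simpa using this
  have h2 : ∀ x : C, Q.odot (Q.imp x ⊥) x = ⊥ := by
    intro x
    have := (Q.quasiadj₁ ⊥ x ⊥).mpr (by simp)
    simpa using this
  constructor
  · constructor
    · rintro ⟨hle, hb⟩
      have h := (Q.quasiadj₂ b a ⊥)
      rw [sup_eq_left.mpr hle] at h
      have hble : b ≤ Q.limp a ⊥ := h.mp (by simp [hb])
      exact le_antisymm hble hle
    · rintro rfl
      exact ⟨le_refl _, h1 a⟩
  · constructor
    · rintro ⟨hle, hb⟩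
      have hab : Q.imp a ⊥ ≤ b := by
        have := Q.anti₁ _ _ hle
        rwa [Q.invol₂] at this
      have h := (Q.quasiadj₁ b a ⊥)
      rw [sup_eq_left.mpr hab] at h
      have hble : b ≤ Q.imp a ⊥ := h.mp (by simp [hb])
      exact le_antisymm hble hab
    · rintro rfl
      refine ⟨?_, h2 a⟩
      rw [Q.invol₁]
end

section
/- Let P be a good lattice pseudoeffect algebra. Form the quasiresiduated lattice Q(P) (with x⊙y := tilde(bar x + bar y) defined iff tilde x ≤ y, x→y := bar x + (x∧y), x⇝y := (x∧y)+tilde x) and then the pseudoeffect algebra P(Q(P)) (with x⊕y := tilde(bar x ⊙ bar y) defined iff x ≤ bar y). Then P(Q(P)) = P: the unary operations and the partial addition coincide with those of P. -/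
namespace PseudoEffectAlgebra

variable {P : Type*} (A : PseudoEffectAlgebra P)

lemma rcompl_lcompl (x : P) : A.rcompl (A.lcompl x) = x :=
  (A.rcompl_unique (A.lcompl x) x (A.lcompl_def x) (A.lcompl_add x)).symm

lemma lcompl_rcompl (x : P) : A.lcompl (A.rcompl x) = x :=
  (A.lcompl_unique (A.rcompl x) x (A.rcompl_def x) (A.rcompl_add x)).symm

lemma lcompl_one : A.lcompl A.one = A.zero := A.add_one _ (A.lcompl_def A.one)

lemma rcompl_one : A.rcompl A.one = A.zero := A.one_add _ (A.rcompl_def A.one)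

lemma D_one_zero : A.D A.one A.zero := by
  have := A.rcompl_def A.one; rwa [A.rcompl_one] at this

lemma add_one_zero : A.add A.one A.zero = A.one := by
  have := A.rcompl_add A.one; rwa [A.rcompl_one] at this

lemma D_zero_one : A.D A.zero A.one := by
  have := A.lcompl_def A.one; rwa [A.lcompl_one] at this

lemma add_zero_one : A.add A.zero A.one = A.one := by
  have := A.lcompl_add A.one; rwa [A.lcompl_one] at this

lemma D_zero_right (x : P) : A.D x A.zero := by
  have h := (A.assoc_iff (A.lcompl x) x A.zero).mp
    ⟨A.lcompl_def x, by rw [A.lcompl_add]; exact A.D_one_zero⟩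
  exact h.1

lemma add_zero (x : P) : A.add x A.zero = x := by
  have h := (A.assoc_iff (A.lcompl x) x A.zero).mp
    ⟨A.lcompl_def x, by rw [A.lcompl_add]; exact A.D_one_zero⟩
  have ha := A.assoc (A.lcompl x) x A.zero (A.lcompl_def x)
    (by rw [A.lcompl_add]; exact A.D_one_zero)
  rw [A.lcompl_add, A.add_one_zero] at ha
  have := A.rcompl_unique (A.lcompl x) (A.add x A.zero) h.2 ha.symm
  rw [this, A.rcompl_lcompl]

lemma D_zero_left (x : P) : A.D A.zero x := by
  have h := (A.assoc_iff A.zero x (A.rcompl x)).mpr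
    ⟨A.rcompl_def x, by rw [A.rcompl_add]; exact A.D_zero_one⟩
  exact h.1

lemma zero_add (x : P) : A.add A.zero x = x := by
  have h := (A.assoc_iff A.zero x (A.rcompl x)).mpr
    ⟨A.rcompl_def x, by rw [A.rcompl_add]; exact A.D_zero_one⟩
  have ha := A.assoc A.zero x (A.rcompl x) h.1 h.2
  rw [A.rcompl_add, A.add_zero_one] at ha
  have := A.lcompl_unique (A.rcompl x) (A.add A.zero x) h.2 ha
  rw [this, A.lcompl_rcompl]

/-- left addition implies right addition in the induced order -/
lemma left_to_right {u x y : P} (hD : A.D u x) (h : A.add u x = y) :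
    ∃ w, A.D x w ∧ A.add x w = y := by
  obtain ⟨a, b, _, hb, _, hxb⟩ := A.P1 u x hD
  exact ⟨b, hb, by rw [hxb, h]⟩

lemma D_iff_le_lcompl {x y : P} : A.D x y ↔ ∃ w, A.D x w ∧ A.add x w = A.lcompl y := by
  constructor
  · intro hD
    set l := A.lcompl (A.add x y) with hl
    have hDl : A.D l (A.add x y) := A.lcompl_def _
    have h1 := (A.assoc_iff l x y).mpr ⟨hD, hDl⟩
    have ha := A.assoc l x y h1.1 h1.2
    rw [A.lcompl_add] at ha
    have := A.lcompl_unique y (A.add l x) h1.2 ha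
    exact A.left_to_right h1.1 this
  · rintro ⟨z, hz, hadd⟩
    have hDy : A.D (A.add x z) y := by rw [hadd]; exact A.lcompl_def y
    have h1 := (A.assoc_iff x z y).mp ⟨hz, hDy⟩
    obtain ⟨u, w, _, hw, _, hyw⟩ := A.P1 z y h1.1
    have h2 := (A.assoc_iff x y w).mpr ⟨hw, by rw [hyw]; exact h1.2⟩
    exact h2.1

end PseudoEffectAlgebra

/-- `x̄* := x → 0 = x̄ + (x ∧ 0)` in the quasiresiduated lattice `Q(P)`. -/
def barOf {P : Type*} [Lattice P] [BoundedOrder P]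
    (A : GoodLatticePseudoEffectAlgebra P) (x : P) : P :=
  A.add (A.lcompl x) (x ⊓ ⊥)

/-- `x̃* := x ⇝ 0 = (x ∧ 0) + x̃` in the quasiresiduated lattice `Q(P)`. -/
def tildeOf {P : Type*} [Lattice P] [BoundedOrder P]
    (A : GoodLatticePseudoEffectAlgebra P) (x : P) : P :=
  A.add (x ⊓ ⊥) (A.rcompl x)

/-- `a ⊙ b := (ā + b̄)~` in the quasiresiduated lattice `Q(P)`. -/
def odotOfP {P : Type*} [Lattice P] [BoundedOrder P]
    (A : GoodLatticePseudoEffectAlgebra P) (a b : P) : P :=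
  A.rcompl (A.add (A.lcompl a) (A.lcompl b))

/-- `P(Q(P)) = P`: for a good lattice pseudoeffect algebra `P`, the
pseudoeffect algebra reconstructed from its quasiresiduated lattice `Q(P)`
(with `x ⊕ y := (x̄* ⊙ ȳ*)~*`, defined iff `x ≤ ȳ*`) coincides with `P`. -/
theorem reconstruction_of_glpea {P : Type*} [Lattice P] [BoundedOrder P]
    (A : GoodLatticePseudoEffectAlgebra P) :
    (∀ x, barOf A x = A.lcompl x) ∧
    (∀ x, tildeOf A x = A.rcompl x) ∧
    (∀ x y, x ≤ barOf A y ↔ A.D x y) ∧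
    (∀ x y, A.D x y →
      tildeOf A (odotOfP A (barOf A x) (barOf A y)) = A.add x y) := by
  have hbar : ∀ x, barOf A x = A.lcompl x := by
    intro x
    rw [barOf, inf_bot_eq, ← A.zero_eq, A.add_zero]
  have htilde : ∀ x, tildeOf A x = A.rcompl x := by
    intro x
    rw [tildeOf, inf_bot_eq, ← A.zero_eq, A.zero_add]
  refine ⟨hbar, htilde, ?_, ?_⟩
  · intro x y
    rw [hbar, ← A.le_iff]
    exact (A.D_iff_le_lcompl).symm
  · intro x y hD
    rw [hbar, hbar, htilde, odotOfP]
    have hle : A.rcompl (A.lcompl x) ≤ A.lcompl y := by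
      rw [A.rcompl_lcompl, ← A.le_iff]
      exact A.D_iff_le_lcompl.mp hD
    have hg := A.good (A.lcompl x) (A.lcompl y) hle
    rw [hg, A.rcompl_lcompl, A.rcompl_lcompl, A.rcompl_lcompl]
end
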